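/- arXiv:1201.0190 — 4 statements merged into one kernel-verified Lean document; each statement's English description precedes it below -/
import Mathlib

section
/- Let $L \subseteq W$ be a null line with $\rho L \cap L^\perp = \{0\}$, let $\alpha \in \mathbb{C} \setminus \{0\}$, and let $V := \ker(\rho - \mathrm{id})$ be the fixed subspace of $\rho$. Then $\dim_{\mathbb{C}}\big(V \cap (L \oplus \rho L)\big) = 1$, the subspace $V$ decomposes as $V = \big(V \cap (L \oplus \rho L)\big) \oplus \big(V \cap (L \oplus \rho L)^\perp\big)$, and consequently $p_{\alpha,L}(\infty)$ preserves $V$ with $\det\big(p_{\alpha,L}(\infty)|_V\big) = -1$, while $\det\big(p_{\alpha,L}(0)|_V\big) = 1$. -/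
/-!
Write `L = ℂ l`. The hypotheses make `(l, ρ l)` a hyperbolic pair:
`B l l = B (ρ l) (ρ l) = 0` while `B l (ρ l) ≠ 0`. So `U = L ⊕ ρL` is a nondegenerate plane and
`W = U ⊕ U^⊥`; both summands are `ρ`-stable, hence the fixed space `V` of `ρ` splits along them.
On `U` the involution `ρ` swaps `l` and `ρ l`, so `V ∩ U = ℂ (l + ρ l)` is a line. A map acting
as a scalar `a` on `U` and as the identity on `U^⊥` therefore preserves `V`, with determinant `a`
there.
-/

open Module

/-- `ActsAs B ρ L a b T` says that the endomorphism `T` acts as multiplication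
by `a` on `L`, as the identity on `(L ⊕ ρL)^⊥`, and as multiplication by `b` on `ρL`.
This is the defining property of the maps `p_{α,L}(λ)` and `q_{α,L}(λ)`. -/
def ActsAs {W : Type*} [AddCommGroup W] [Module ℂ W]
    (B : LinearMap.BilinForm ℂ W) (ρ : Module.End ℂ W) (L : Submodule ℂ W)
    (a b : ℂ) (T : Module.End ℂ W) : Prop :=
  (∀ x ∈ L, T x = a • x) ∧
  (∀ x ∈ B.orthogonal (L ⊔ Submodule.map ρ L), T x = x) ∧
  (∀ x ∈ Submodule.map ρ L, T x = b • x)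

namespace Submodule

variable {R M : Type*} [Ring R] [AddCommGroup M] [Module R M]

theorem isCompl_comap_subtype_of_sup_eq {p q r : Submodule R M} (hqr : Disjoint q r)
    (h : q ⊔ r = p) : IsCompl (q.comap p.subtype) (r.comap p.subtype) := by
  constructor
  · rw [disjoint_def]
    intro x hq hr
    exact Subtype.ext ((disjoint_def.1 hqr) x hq hr)
  · rw [codisjoint_iff]
    apply map_injective_of_injective p.injective_subtype
    rw [map_sup, map_comap_subtype, map_comap_subtype, map_subtype_top, ← h,
      inf_of_le_right le_sup_left, inf_of_le_right le_sup_right]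

theorem exists_eq_span_singleton_of_finrank_eq_one {K : Type*} [DivisionRing K] [Module K M]
    {L : Submodule K M} (h : finrank K L = 1) : ∃ l ≠ 0, L = K ∙ l := by
  obtain ⟨⟨l, hl⟩, hl0, hspan⟩ := finrank_eq_one_iff'.1 h
  refine ⟨l, fun h0 => hl0 (Subtype.ext h0), le_antisymm (fun x hx => ?_) ?_⟩
  · obtain ⟨c, hc⟩ := hspan ⟨x, hx⟩
    exact mem_span_singleton.2 ⟨c, congrArg Subtype.val hc⟩
  · exact (span_singleton_le_iff_mem l L).2 hl

end Submodule

namespace LinearMap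

open Submodule

section Ring

variable {R M : Type*} [Ring R] [AddCommGroup M] [Module R M]

theorem ker_eq_inf_sup_inf_of_isCompl {U O : Submodule R M} (hUO : IsCompl U O)
    {f : Module.End R M} (hU : ∀ x ∈ U, f x ∈ U) (hO : ∀ x ∈ O, f x ∈ O) :
    ker f = ker f ⊓ U ⊔ ker f ⊓ O := by
  refine le_antisymm (fun x hx => ?_) (sup_le inf_le_left inf_le_left)
  obtain ⟨u, hu, w, hw, rfl⟩ := mem_sup.1 (hUO.sup_eq_top ▸ mem_top : x ∈ U ⊔ O)
  have hfuw : f u = -f w := eq_neg_of_add_eq_zero_left (by simpa using hx)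
  have hfu : f u = 0 :=
    disjoint_def.1 hUO.disjoint _ (hU u hu) (hfuw ▸ O.neg_mem (hO w hw))
  have hfw : f w = 0 := by simpa [hfu] using hfuw
  exact add_mem_sup ⟨hfu, hu⟩ ⟨hfw, hw⟩

end Ring

section Field

variable {K M : Type*} [Field K] [AddCommGroup M] [Module K M]

theorem det_eq_pow_finrank_of_isCompl [FiniteDimensional K M] {A C : Submodule K M}
    (hAC : IsCompl A C) {T : Module.End K M} {a : K} (hA : ∀ x ∈ A, T x = a • x)
    (hC : ∀ x ∈ C, T x = x) : LinearMap.det T = a ^ finrank K A := by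
  let e := prodEquivOfIsCompl A C hAC
  calc LinearMap.det T
      = LinearMap.det ((e.symm : M →ₗ[K] A × C) ∘ₗ T ∘ₗ (e : A × C →ₗ[K] M)) :=
        (det_conj T e.symm).symm
    _ = LinearMap.det ((a • id : Module.End K A).prodMap (id : Module.End K C)) := by
        congr 1
        refine LinearMap.ext fun ⟨⟨x, hx⟩, ⟨y, hy⟩⟩ => e.injective ?_
        simp only [comp_apply, LinearEquiv.coe_coe, LinearEquiv.apply_symm_apply]
        simp [e, hA x hx, hC y hy]
    _ = a ^ finrank K A := by rw [det_prodMap, det_smul, det_id, det_id, mul_one, mul_one]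

theorem exists_det_restrict_eq_pow_finrank [FiniteDimensional K M] {V A C : Submodule K M}
    (hAC : Disjoint A C) (hV : A ⊔ C = V) {T : Module.End K M} {a : K}
    (hA : ∀ x ∈ A, T x = a • x) (hC : ∀ x ∈ C, T x = x) :
    ∃ h : ∀ x ∈ V, T x ∈ V, LinearMap.det (T.restrict h) = a ^ finrank K A := by
  have hTV : ∀ x ∈ V, T x ∈ V := by
    subst hV
    intro x hx
    obtain ⟨y, hy, z, hz, rfl⟩ := mem_sup.1 hx
    rw [map_add, hA y hy, hC z hz]
    exact add_mem_sup (A.smul_mem a hy) hz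
  refine ⟨hTV, ?_⟩
  rw [det_eq_pow_finrank_of_isCompl (isCompl_comap_subtype_of_sup_eq hAC hV)
      (fun x hx => Subtype.ext (by simpa using hA _ hx)) (fun x hx => Subtype.ext (hC _ hx)),
    (comapSubtypeEquivOfLe (hV ▸ le_sup_left)).finrank_eq]

theorem apply_mem_span_pair_of_swap {R M : Type*} [Semiring R] [AddCommMonoid M] [Module R M]
    {ρ : Module.End R M} {l m : M} (hl : ρ l = m) (hm : ρ m = l) :
    ∀ x ∈ span R {l, m}, ρ x ∈ span R {l, m} := by
  intro x hx
  obtain ⟨s, t, rfl⟩ := mem_span_pair.1 hx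
  rw [map_add, map_smul, map_smul, hl, hm, add_comm]
  exact mem_span_pair.2 ⟨t, s, rfl⟩

theorem ker_sub_one_inf_span_pair {ρ : Module.End K M} {l m : M} (hl : ρ l = m) (hm : ρ m = l)
    (hlm : l ≠ m) : ker (ρ - 1) ⊓ span K {l, m} = K ∙ (l + m) := by
  refine le_antisymm ?_ ?_
  · rintro x ⟨hxρ, hx⟩
    obtain ⟨s, t, rfl⟩ := mem_span_pair.1 hx
    have hts : (t - s) • (l - m) = 0 := by
      simp only [SetLike.mem_coe, mem_ker, sub_apply, Module.End.one_apply, map_add, map_smul,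
        hl, hm] at hxρ
      linear_combination (norm := module) hxρ
    have hst : t = s := sub_eq_zero.1 ((smul_eq_zero.1 hts).resolve_right (sub_ne_zero.2 hlm))
    exact mem_span_singleton.2 ⟨s, by rw [hst, smul_add]⟩
  · refine (span_singleton_le_iff_mem _ _).2 ⟨?_, add_mem (subset_span (by simp))
      (subset_span (by simp))⟩
    simp [hl, hm, add_comm]

end Field

end LinearMap

namespace LinearMap.BilinForm

open Submodule

variable {K M : Type*} [Field K] [AddCommGroup M] [Module K M] {B : LinearMap.BilinForm K M}

theorem isCompl_orthogonal_span_pair [FiniteDimensional K M] (hB : B.IsRefl) {l m : M}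
    (hl : B l l = 0) (hm : B m m = 0) (hlm : B l m ≠ 0) :
    IsCompl (span K {l, m}) (B.orthogonal (span K {l, m})) := by
  rw [isCompl_orthogonal_iff_disjoint hB, disjoint_def]
  intro x hx hxo
  obtain ⟨s, t, rfl⟩ := mem_span_pair.1 hx
  have hml : B m l ≠ 0 := fun h => hlm (hB m l h)
  have hBl : t * B l m = 0 := by
    simpa [hl] using (mem_orthogonal_iff.1 hxo) l (subset_span (by simp))
  have hBm : s * B m l = 0 := by
    simpa [hm] using (mem_orthogonal_iff.1 hxo) m (subset_span (by simp))
  simp [(mul_eq_zero.1 hBl).resolve_right hlm, (mul_eq_zero.1 hBm).resolve_right hml]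

theorem apply_ne_zero_of_map_inf_orthogonal_eq_bot {ρ : Module.End K M}
    (hρ : Function.Injective ρ) {l : M} (hl : l ≠ 0)
    (h : map ρ (K ∙ l) ⊓ B.orthogonal (K ∙ l) = ⊥) : B l (ρ l) ≠ 0 := by
  intro hlρl
  refine hl (hρ ?_)
  rw [map_zero, ← mem_bot K, ← h]
  refine ⟨mem_map_of_mem (mem_span_singleton_self l), mem_orthogonal_iff.2 fun n hn => ?_⟩
  obtain ⟨c, rfl⟩ := mem_span_singleton.1 hn
  simp [hlρl]

theorem apply_mem_orthogonal_of_involutive {ρ : Module.End K M} (hρ : Function.Involutive ρ)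
    (hρB : ∀ x y, B (ρ x) (ρ y) = B x y) {N : Submodule K M} (hN : ∀ x ∈ N, ρ x ∈ N) :
    ∀ x ∈ B.orthogonal N, ρ x ∈ B.orthogonal N := by
  intro x hx
  refine mem_orthogonal_iff.2 fun n hn => ?_
  change B n (ρ x) = 0
  rw [← hρ n, hρB]
  exact mem_orthogonal_iff.1 hx _ (hN n hn)

end LinearMap.BilinForm

theorem ActsAs.apply_eq_smul_of_mem_sup {W : Type*} [AddCommGroup W] [Module ℂ W]
    {B : LinearMap.BilinForm ℂ W} {ρ : Module.End ℂ W} {L : Submodule ℂ W} {a : ℂ}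
    {T : Module.End ℂ W} (hT : ActsAs B ρ L a a T) :
    ∀ x ∈ L ⊔ Submodule.map ρ L, T x = a • x := by
  intro x hx
  obtain ⟨y, hy, z, hz, rfl⟩ := Submodule.mem_sup.1 hx
  rw [map_add, hT.1 y hy, hT.2.2 z hz, smul_add]

open Submodule LinearMap

theorem stmt7_general {W : Type*} [AddCommGroup W] [Module ℂ W] [FiniteDimensional ℂ W]
    (B : LinearMap.BilinForm ℂ W) (hB : ∀ x y, B x y = B y x)
    (ρ : Module.End ℂ W) (hρ2 : ρ * ρ = 1) (hρB : ∀ x y, B (ρ x) (ρ y) = B x y)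
    (L : Submodule ℂ W) (hL1 : Module.finrank ℂ L = 1) (hLnull : ∀ l ∈ L, B l l = 0)
    (hLρ : Submodule.map ρ L ⊓ B.orthogonal L = ⊥)
    (pinf p0 : Module.End ℂ W)
    (hpinf : ActsAs B ρ L (-1) (-1) pinf)
    (hp0 : ActsAs B ρ L 1 1 p0) :
    Module.finrank ℂ ↥(LinearMap.ker (ρ - 1) ⊓ (L ⊔ Submodule.map ρ L)) = 1 ∧
    (LinearMap.ker (ρ - 1)
        = LinearMap.ker (ρ - 1) ⊓ (L ⊔ Submodule.map ρ L)
            ⊔ LinearMap.ker (ρ - 1) ⊓ B.orthogonal (L ⊔ Submodule.map ρ L) ∧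
      (LinearMap.ker (ρ - 1) ⊓ (L ⊔ Submodule.map ρ L))
          ⊓ (LinearMap.ker (ρ - 1) ⊓ B.orthogonal (L ⊔ Submodule.map ρ L)) = ⊥) ∧
    (∃ h : ∀ x ∈ LinearMap.ker (ρ - 1), pinf x ∈ LinearMap.ker (ρ - 1),
        LinearMap.det (pinf.restrict h) = -1) ∧
    (∃ h : ∀ x ∈ LinearMap.ker (ρ - 1), p0 x ∈ LinearMap.ker (ρ - 1),
        LinearMap.det (p0.restrict h) = 1) := by
  obtain ⟨l, hl0, rfl⟩ := exists_eq_span_singleton_of_finrank_eq_one hL1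
  have hρ : Function.Involutive ρ := fun x => congr($hρ2 x)
  have hU : (ℂ ∙ l) ⊔ map ρ (ℂ ∙ l) = span ℂ {l, ρ l} := by
    rw [Submodule.map_span, Set.image_singleton, span_insert]
  have hll : B l l = 0 := hLnull l (mem_span_singleton_self l)
  have hlρl : B l (ρ l) ≠ 0 :=
    BilinForm.apply_ne_zero_of_map_inf_orthogonal_eq_bot hρ.injective hl0 hLρ
  rw [hU]
  set U := span ℂ {l, ρ l}
  have hUO : IsCompl U (B.orthogonal U) := BilinForm.isCompl_orthogonal_span_pair
    (fun x y h => by rwa [hB]) hll (by rw [hρB, hll]) hlρl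
  have hρU : ∀ x ∈ U, ρ x ∈ U := apply_mem_span_pair_of_swap rfl (hρ l)
  have hρO := BilinForm.apply_mem_orthogonal_of_involutive hρ hρB hρU
  have hsplit := ker_eq_inf_sup_inf_of_isCompl hUO (f := ρ - 1)
    (fun x hx => U.sub_mem (hρU x hx) hx) (fun x hx => (B.orthogonal U).sub_mem (hρO x hx) hx)
  have hdisj : Disjoint (ker (ρ - 1) ⊓ U) (ker (ρ - 1) ⊓ B.orthogonal U) :=
    hUO.disjoint.mono inf_le_right inf_le_right
  have hrank : Module.finrank ℂ ↥(ker (ρ - 1) ⊓ U) = 1 := by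
    rw [ker_sub_one_inf_span_pair rfl (hρ l) (fun h => hlρl (h ▸ hll))]
    exact finrank_span_singleton fun h => hlρl (by simp [eq_neg_of_add_eq_zero_right h, hll])
  have hdet : ∀ {T : Module.End ℂ W} {a : ℂ}, ActsAs B ρ (ℂ ∙ l) a a T →
      ∃ h : ∀ x ∈ ker (ρ - 1), T x ∈ ker (ρ - 1), LinearMap.det (T.restrict h) = a := by
    intro T a hT
    simpa [hrank] using exists_det_restrict_eq_pow_finrank hdisj hsplit.symm
      (fun x hx => hT.apply_eq_smul_of_mem_sup x (hU ▸ hx.2)) (fun x hx => hT.2.1 x (hU ▸ hx.2))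
  exact ⟨hrank, ⟨hsplit, hdisj.eq_bot⟩, hdet hpinf, hdet hp0⟩

/-- For `V = ker(ρ - 1)` the fixed space of `ρ`: `dim (V ∩ (L ⊕ ρL)) = 1`,
`V = (V ∩ (L ⊕ ρL)) ⊕ (V ∩ (L ⊕ ρL)^⊥)`, `p_{α,L}(∞)` (acting as `-1` on `L, ρL` and `1`
on `(L ⊕ ρL)^⊥`) preserves `V` with determinant `-1` on `V`, while `p_{α,L}(0)` has
determinant `1` on `V`. -/
theorem stmt7 {W : Type*} [AddCommGroup W] [Module ℂ W] [FiniteDimensional ℂ W]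
    (B : LinearMap.BilinForm ℂ W) (hB : ∀ x y, B x y = B y x) (hBnd : B.Nondegenerate)
    (ρ : Module.End ℂ W) (hρ2 : ρ * ρ = 1) (hρB : ∀ x y, B (ρ x) (ρ y) = B x y)
    (L : Submodule ℂ W) (hL1 : Module.finrank ℂ L = 1) (hLnull : ∀ l ∈ L, B l l = 0)
    (hLρ : Submodule.map ρ L ⊓ B.orthogonal L = ⊥)
    (α : ℂ) (hα : α ≠ 0)
    (pinf p0 : Module.End ℂ W)
    (hpinf : ActsAs B ρ L (-1) (-1) pinf)
    (hp0 : ActsAs B ρ L 1 1 p0) :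
    Module.finrank ℂ ↥(LinearMap.ker (ρ - 1) ⊓ (L ⊔ Submodule.map ρ L)) = 1 ∧
    (LinearMap.ker (ρ - 1)
        = LinearMap.ker (ρ - 1) ⊓ (L ⊔ Submodule.map ρ L)
            ⊔ LinearMap.ker (ρ - 1) ⊓ B.orthogonal (L ⊔ Submodule.map ρ L) ∧
      (LinearMap.ker (ρ - 1) ⊓ (L ⊔ Submodule.map ρ L))
          ⊓ (LinearMap.ker (ρ - 1) ⊓ B.orthogonal (L ⊔ Submodule.map ρ L)) = ⊥) ∧
    (∃ h : ∀ x ∈ LinearMap.ker (ρ - 1), pinf x ∈ LinearMap.ker (ρ - 1),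
        LinearMap.det (pinf.restrict h) = -1) ∧
    (∃ h : ∀ x ∈ LinearMap.ker (ρ - 1), p0 x ∈ LinearMap.ker (ρ - 1),
        LinearMap.det (p0.restrict h) = 1) :=
  stmt7_general B hB ρ hρ2 hρB L hL1 hLnull hLρ pinf p0 hpinf hp0
end

section
/- Let $L \subseteq W$ be a null line with $\rho L \cap L^\perp = \{0\}$, let $\alpha \in \mathbb{C} \setminus \{0\}$ and $\lambda \in \mathbb{C} \setminus \{\alpha, -\alpha\}$. Let $l \in L$, $w \in (L \oplus \rho L)^\perp$, and let $\xi$ be the endomorphism of $W$ given by $\xi(x) = (l, x)w - (w, x)l$. Then $p_{\alpha,L}(\lambda) \circ \xi \circ p_{\alpha,L}(\lambda)^{-1} = \frac{\alpha - \lambda}{\alpha + \lambda}\, \xi$. -/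
open Module

/-!
Write `ξ = l ∧ w`. Conjugating by any `p` that preserves the form gives
`p ∘ (l ∧ w) ∘ p⁻¹ = (p l) ∧ (p w)`, which here is `((α - λ)/(α + λ) • l) ∧ w`. And
`p = p_{α,L}(λ)` does preserve the form: `L` and `ρL` are totally isotropic,
`W = (L ⊕ ρL) ⊕ (L ⊕ ρL)^⊥` because the form pairs `L` with `ρL` nondegenerately, and `p` scales
`L` and `ρL` by mutually inverse factors.
-/

namespace LinearMap.BilinForm

section CommRing

variable {R M : Type*} [CommRing R] [AddCommGroup M] [Module R M] {B : LinearMap.BilinForm R M}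

theorem map_le_orthogonal_map {f : Module.End R M} (hf : B.IsOrthogonal f)
    {L : Submodule R M} (hL : L ≤ B.orthogonal L) :
    L.map f ≤ B.orthogonal (L.map f) := by
  rintro _ ⟨y, hy, rfl⟩ _ ⟨x, hx, rfl⟩
  rw [hf]
  exact hL hy x hx

theorem conj_apply_of_isOrthogonal {p p' ξ : Module.End R M} (hp : B.IsOrthogonal p)
    (hpp' : p * p' = 1) {l w : M} (hξ : ∀ x, ξ x = B l x • w - B w x • l) (x : M) :
    (p * ξ * p') x = B (p l) x • p w - B (p w) x • p l := by
  have hpp'x : p (p' x) = x := by simpa using LinearMap.congr_fun hpp' x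
  simp only [Module.End.mul_apply, hξ, map_sub, map_smul, ← hp _ (p' x), hpp'x]

end CommRing

section Field

variable {K V : Type*} [Field K] [AddCommGroup V] [Module K V] {B : LinearMap.BilinForm K V}

theorem le_orthogonal_self_of_forall_apply_self_eq_zero (h2 : (2 : K) ≠ 0)
    (hB : ∀ x y, B x y = B y x) {L : Submodule K V} (hL : ∀ x ∈ L, B x x = 0) :
    L ≤ B.orthogonal L := by
  intro y hy x hx
  have hxy := hL (x + y) (add_mem hx hy)
  simp only [map_add, LinearMap.add_apply, hL x hx, hL y hy, hB y x] at hxy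
  exact (mul_eq_zero.1 (by linear_combination hxy : (2 : K) * B x y = 0)).resolve_left h2

theorem disjoint_sup_map_orthogonal {ρ : Module.End K V} (hρ2 : ρ * ρ = 1)
    (hρ : B.IsOrthogonal ρ) {L : Submodule K V} (hL : L ≤ B.orthogonal L)
    (hLρ : L.map ρ ⊓ B.orthogonal L = ⊥) :
    Disjoint (L ⊔ L.map ρ) (B.orthogonal (L ⊔ L.map ρ)) := by
  have hρρ : ∀ x, ρ (ρ x) = x := fun x => by simpa using LinearMap.congr_fun hρ2 x
  rw [Submodule.disjoint_def]
  intro m hm hmo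
  obtain ⟨x₁, hx₁, _, ⟨x₂, hx₂, rfl⟩, rfl⟩ := Submodule.mem_sup.1 hm
  have horth : ∀ n ∈ L ⊔ L.map ρ, B n x₁ + B n (ρ x₂) = 0 := fun n hn => by
    simpa using hmo n hn
  have hρx₂ : ρ x₂ = 0 := by
    refine (Submodule.eq_bot_iff _).1 hLρ _ ⟨⟨x₂, hx₂, rfl⟩, fun n hn => ?_⟩
    have := horth n (Submodule.mem_sup_left hn)
    rwa [(hL hx₁ n hn : B n x₁ = 0), zero_add] at this
  have hρx₁ : ρ x₁ = 0 := by
    refine (Submodule.eq_bot_iff _).1 hLρ _ ⟨⟨x₁, hx₁, rfl⟩, fun n hn => ?_⟩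
    have := horth (ρ n) (Submodule.mem_sup_right ⟨n, hn, rfl⟩)
    rw [hρ n x₂, (hL hx₂ n hn : B n x₂ = 0), add_zero] at this
    rw [← hρ n (ρ x₁), hρρ]
    exact this
  rw [hρx₂, ← hρρ x₁, hρx₁, map_zero, add_zero]

end Field

end LinearMap.BilinForm

open LinearMap.BilinForm

theorem ActsAs.isOrthogonal {W : Type*} [AddCommGroup W] [Module ℂ W]
    {B : LinearMap.BilinForm ℂ W} (hB : ∀ x y, B x y = B y x) {ρ : Module.End ℂ W}
    {L : Submodule ℂ W} (hL : L ≤ B.orthogonal L) (hρL : L.map ρ ≤ B.orthogonal (L.map ρ))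
    (hcod : Codisjoint (L ⊔ L.map ρ) (B.orthogonal (L ⊔ L.map ρ)))
    {a b : ℂ} (hab : a * b = 1) {T : Module.End ℂ W} (hT : ActsAs B ρ L a b T) :
    B.IsOrthogonal T := by
  have decomp : ∀ x, ∃ x₁ ∈ L, ∃ x₂ ∈ L.map ρ, ∃ x₃ ∈ B.orthogonal (L ⊔ L.map ρ),
      x = x₁ + x₂ + x₃ := fun x => by
    obtain ⟨m, x₃, hm, hx₃, rfl⟩ := Submodule.codisjoint_iff_exists_add_eq.1 hcod x
    obtain ⟨x₁, hx₁, x₂, hx₂, rfl⟩ := Submodule.mem_sup.1 hm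
    exact ⟨x₁, hx₁, x₂, hx₂, x₃, hx₃, rfl⟩
  intro x y
  obtain ⟨x₁, hx₁, x₂, hx₂, x₃, hx₃, rfl⟩ := decomp x
  obtain ⟨y₁, hy₁, y₂, hy₂, y₃, hy₃, rfl⟩ := decomp y
  have h₁₁ : B x₁ y₁ = 0 := hL hy₁ x₁ hx₁
  have h₂₂ : B x₂ y₂ = 0 := hρL hy₂ x₂ hx₂
  have h₁₃ : B x₁ y₃ = 0 := hy₃ x₁ (Submodule.mem_sup_left hx₁)
  have h₂₃ : B x₂ y₃ = 0 := hy₃ x₂ (Submodule.mem_sup_right hx₂)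
  have h₃₁ : B x₃ y₁ = 0 := (hB _ _).trans (hx₃ y₁ (Submodule.mem_sup_left hy₁))
  have h₃₂ : B x₃ y₂ = 0 := (hB _ _).trans (hx₃ y₂ (Submodule.mem_sup_right hy₂))
  simp only [map_add, hT.1 _ hx₁, hT.1 _ hy₁, hT.2.2 _ hx₂, hT.2.2 _ hy₂, hT.2.1 _ hx₃,
    hT.2.1 _ hy₃, LinearMap.add_apply, map_smul, LinearMap.smul_apply, smul_eq_mul,
    h₁₁, h₂₂, h₁₃, h₂₃, h₃₁, h₃₂]
  linear_combination (B x₁ y₂ + B x₂ y₁) * hab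

theorem stmt8_general {W : Type*} [AddCommGroup W] [Module ℂ W] [FiniteDimensional ℂ W]
    (B : LinearMap.BilinForm ℂ W) (hB : ∀ x y, B x y = B y x)
    (ρ : Module.End ℂ W) (hρ2 : ρ * ρ = 1) (hρB : ∀ x y, B (ρ x) (ρ y) = B x y)
    (L : Submodule ℂ W) (hLnull : ∀ l ∈ L, B l l = 0)
    (hLρ : Submodule.map ρ L ⊓ B.orthogonal L = ⊥)
    (α lam : ℂ) (hlam1 : lam ≠ α) (hlam2 : lam ≠ -α)
    (l w : W) (hl : l ∈ L) (hw : w ∈ B.orthogonal (L ⊔ Submodule.map ρ L))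
    (p p' : Module.End ℂ W)
    (hp : ActsAs B ρ L ((α - lam) / (α + lam)) ((α + lam) / (α - lam)) p)
    (hpinv : p * p' = 1 ∧ p' * p = 1)
    (ξ : Module.End ℂ W) (hξ : ∀ x, ξ x = B l x • w - B w x • l) :
    p * ξ * p' = ((α - lam) / (α + lam)) • ξ := by
  have hrefl : B.IsRefl := fun x y h => (hB y x).trans h
  have hLiso : L ≤ B.orthogonal L := le_orthogonal_self_of_forall_apply_self_eq_zero two_ne_zero hB hLnull
  have hcompl : IsCompl (L ⊔ L.map ρ) (B.orthogonal (L ⊔ L.map ρ)) :=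
    (isCompl_orthogonal_iff_disjoint hrefl).2 (disjoint_sup_map_orthogonal hρ2 hρB hLiso hLρ)
  have hfactors : (α - lam) / (α + lam) * ((α + lam) / (α - lam)) = 1 := by
    have : α + lam ≠ 0 := fun h => hlam2 (by linear_combination h)
    field_simp [sub_ne_zero.2 hlam1.symm]
  have hpB : B.IsOrthogonal p :=
    hp.isOrthogonal hB hLiso (map_le_orthogonal_map hρB hLiso) hcompl.codisjoint hfactors
  ext x
  rw [conj_apply_of_isOrthogonal hpB hpinv.1 hξ, hp.1 l hl, hp.2.1 w hw, LinearMap.smul_apply, hξ]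
  simp only [map_smul, LinearMap.smul_apply, smul_eq_mul, smul_sub, smul_smul, mul_comm]

/-- For `l ∈ L`, `w ∈ (L ⊕ ρL)^⊥` and `ξ(x) = (l,x)w - (w,x)l`, conjugating `ξ` by
`p_{α,L}(λ)` multiplies it by `(α - λ)/(α + λ)`. -/
theorem stmt8 {W : Type*} [AddCommGroup W] [Module ℂ W] [FiniteDimensional ℂ W]
    (B : LinearMap.BilinForm ℂ W) (hB : ∀ x y, B x y = B y x) (hBnd : B.Nondegenerate)
    (ρ : Module.End ℂ W) (hρ2 : ρ * ρ = 1) (hρB : ∀ x y, B (ρ x) (ρ y) = B x y)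
    (L : Submodule ℂ W) (hL1 : Module.finrank ℂ L = 1) (hLnull : ∀ l ∈ L, B l l = 0)
    (hLρ : Submodule.map ρ L ⊓ B.orthogonal L = ⊥)
    (α lam : ℂ) (hα : α ≠ 0) (hlam1 : lam ≠ α) (hlam2 : lam ≠ -α)
    (l w : W) (hl : l ∈ L) (hw : w ∈ B.orthogonal (L ⊔ Submodule.map ρ L))
    (p p' : Module.End ℂ W)
    (hp : ActsAs B ρ L ((α - lam) / (α + lam)) ((α + lam) / (α - lam)) p)
    (hpinv : p * p' = 1 ∧ p' * p = 1)
    (ξ : Module.End ℂ W) (hξ : ∀ x, ξ x = B l x • w - B w x • l) :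
    p * ξ * p' = ((α - lam) / (α + lam)) • ξ :=
  stmt8_general B hB ρ hρ2 hρB L hLnull hLρ α lam hlam1 hlam2 l w hl hw p p' hp hpinv ξ hξ
end

section
/- Let $L \subseteq W$ be a null line with $\rho L \cap L^\perp = \{0\}$, let $\alpha \in \mathbb{C} \setminus \{0\}$, and let $A$ be a skew-adjoint endomorphism of $W$, i.e. $(Ax, y) = -(x, Ay)$ for all $x, y \in W$. Then: (i) $A L \subseteq L \oplus (L \oplus \rho L)^\perp$ and $A (\rho L) \subseteq \rho L \oplus (L \oplus \rho L)^\perp$; and (ii) the map $\lambda \mapsto (\lambda^2 - \alpha^2)\, p_{\alpha,L}(\lambda) \circ A \circ p_{\alpha,L}(\lambda)^{-1}$, defined for $\lambda \in \mathbb{C} \setminus \{\alpha, -\alpha\}$, extends to a polynomial map $\mathbb{C} \to \mathrm{End}(W)$ of degree at most $2$ in $\lambda$; in particular $\lambda \mapsto p_{\alpha,L}(\lambda) \circ A \circ p_{\alpha,L}(\lambda)^{-1}$ has at most simple poles at $\lambda = \pm\alpha$. -/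
/-!
Pick `u` spanning `L`. Null-ness of `L` and `ρL` together with `ρL ∩ L^⊥ = 0` make `(u, ρu)` a
hyperbolic pair, so the rank-one maps `π₁ x = (B x ρu / B u ρu) • u` and
`π₂ x = (B x u / B ρu u) • ρu` are orthogonal idempotents onto `L` and `ρL` with common kernel
`(L ⊕ ρL)^⊥`. Hence `p(λ) = 1 + (μ - 1) π₁ + (μ⁻¹ - 1) π₂` with `μ = (α - λ)/(α + λ)`, and its
inverse swaps `μ` and `μ⁻¹`. Skew-adjointness gives `B (A w) w = 0`, i.e. `π₂ A π₁ = π₁ A π₂ = 0`;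
this is (i), and it removes from `p(λ) A p(λ)⁻¹` the terms with coefficients `(μ - 1)²` and
`(μ⁻¹ - 1)²`. The remaining coefficients `μ - 1`, `μ⁻¹ - 1` and `(μ - 1)(μ⁻¹ - 1)` become
`-2λ(λ - α)`, `-2λ(λ + α)` and `4λ²` after multiplication by `λ² - α²`.
-/

open Module

section ProjScale

variable {K R : Type*} [Field K] [Ring R] [Algebra K R]

/-- For orthogonal idempotents `p`, `q`, this acts as `a` on the image of `p`, as `b` on that of
`q`, and as `1` on their common kernel. -/
def projScale (p q : R) (a b : K) : R := 1 + (a - 1) • p + (b - 1) • q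

variable {p q x : R}

theorem projScale_mul_projScale (hp : p * p = p) (hq : q * q = q) (hpq : p * q = 0)
    (hqp : q * p = 0) (a b a' b' : K) :
    projScale p q a b * projScale p q a' b' = projScale p q (a * a') (b * b') := by
  simp only [projScale, add_mul, mul_add, smul_mul_assoc, mul_smul_comm, one_mul, mul_one,
    hp, hq, hpq, hqp, smul_zero]
  module

theorem projScale_mul_projScale_eq_one (hp : p * p = p) (hq : q * q = q) (hpq : p * q = 0)
    (hqp : q * p = 0) {a b a' b' : K} (ha : a * a' = 1) (hb : b * b' = 1) :
    projScale p q a b * projScale p q a' b' = 1 := by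
  rw [projScale_mul_projScale hp hq hpq hqp, ha, hb]
  simp [projScale]

theorem projScale_mul_mul_projScale (hpxq : p * x * q = 0) (hqxp : q * x * p = 0)
    (a b a' b' : K) :
    projScale p q a b * x * projScale p q a' b' =
      x + (a' - 1) • (x * p) + (b' - 1) • (x * q) + (a - 1) • (p * x) + (b - 1) • (q * x)
        + ((a - 1) * (a' - 1)) • (p * x * p) + ((b - 1) * (b' - 1)) • (q * x * q) := by
  simp only [projScale, add_mul, mul_add, smul_mul_assoc, mul_smul_comm, one_mul, mul_one,
    hpxq, hqxp, smul_zero]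
  module

theorem exists_quadratic_sq_sub_sq_smul_projScale_conj (hpxq : p * x * q = 0)
    (hqxp : q * x * p = 0) (α : K) :
    ∃ C₀ C₁ C₂ : R, ∀ t, t ≠ α → t ≠ -α →
      (t ^ 2 - α ^ 2) • (projScale p q ((α - t) / (α + t)) ((α + t) / (α - t)) * x *
        projScale p q ((α + t) / (α - t)) ((α - t) / (α + t))) = C₀ + t • C₁ + t ^ 2 • C₂ := by
  refine ⟨(-α ^ 2) • x, (2 * α) • (x * q + p * x - x * p - q * x),
    x - (2 : K) • (x * p + q * x + x * q + p * x) + (4 : K) • (p * x * p + q * x * q),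
    fun t h₁ h₂ => ?_⟩
  have hs : α + t ≠ 0 := fun h => h₂ (by linear_combination h)
  have hd : α - t ≠ 0 := fun h => h₁ (by linear_combination -h)
  rw [projScale_mul_mul_projScale hpxq hqxp]
  match_scalars <;> field_simp <;> ring

end ProjScale

section LineProj

variable {K W : Type*} [Field K] [AddCommGroup W] [Module K W] (B : LinearMap.BilinForm K W)

/-- The projection onto `K ∙ u` with kernel `v^⊥`, provided `B u v ≠ 0`. -/
def lineProj (u v : W) : Module.End K W := (B u v)⁻¹ • (B.flip v).smulRight u

variable {B} {u v : W}

theorem lineProj_apply (x : W) : lineProj B u v x = (B x v / B u v) • u := by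
  simp [lineProj, div_eq_inv_mul, mul_smul]

theorem lineProj_apply_self (h : B u v ≠ 0) : lineProj B u v u = u := by
  rw [lineProj_apply, div_self h, one_smul]

theorem lineProj_apply_eq_zero {x : W} (h : B x v = 0) : lineProj B u v x = 0 := by
  rw [lineProj_apply, h, zero_div, zero_smul]

theorem lineProj_mul_self (h : B u v ≠ 0) : lineProj B u v * lineProj B u v = lineProj B u v := by
  ext x
  rw [Module.End.mul_apply, lineProj_apply x, map_smul, lineProj_apply_self h]

theorem lineProj_mul_lineProj_swap (hv : B v v = 0) : lineProj B u v * lineProj B v u = 0 := by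
  ext x
  rw [Module.End.mul_apply, lineProj_apply x, map_smul, lineProj_apply_eq_zero hv, smul_zero,
    LinearMap.zero_apply]

theorem lineProj_mul_mul_lineProj_swap {A : Module.End K W} (hA : B (A u) u = 0) :
    lineProj B v u * A * lineProj B u v = 0 := by
  ext x
  rw [Module.End.mul_apply, Module.End.mul_apply, lineProj_apply x, map_smul, map_smul,
    lineProj_apply_eq_zero hA, smul_zero, LinearMap.zero_apply]

theorem lineProj_mem_span (x : W) : lineProj B u v x ∈ K ∙ u := by
  rw [lineProj_apply]
  exact Submodule.smul_mem _ _ (Submodule.mem_span_singleton_self u)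

theorem sub_lineProj_sub_lineProj_mem_orthogonal (hB : ∀ x y, B x y = B y x) (hu : B u u = 0)
    (hv : B v v = 0) (huv : B u v ≠ 0) (x : W) :
    x - lineProj B u v x - lineProj B v u x ∈ B.orthogonal ((K ∙ u) ⊔ (K ∙ v)) := by
  have hvu : B v u ≠ 0 := hB u v ▸ huv
  rw [LinearMap.BilinForm.mem_orthogonal_iff]
  intro n hn
  obtain ⟨_, ha, _, hb, rfl⟩ := Submodule.mem_sup.mp hn
  obtain ⟨a, rfl⟩ := Submodule.mem_span_singleton.mp ha
  obtain ⟨b, rfl⟩ := Submodule.mem_span_singleton.mp hb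
  simp only [lineProj_apply, map_add, map_smul, map_sub, LinearMap.add_apply,
    LinearMap.smul_apply, smul_eq_mul, hu, hv, hB x u, hB x v, hB v u]
  field_simp
  ring

theorem map_span_le_span_sup_orthogonal (hB : ∀ x y, B x y = B y x) (hu : B u u = 0)
    (hv : B v v = 0) (huv : B u v ≠ 0) {A : Module.End K W} (hA : B (A u) u = 0) :
    (K ∙ u).map A ≤ (K ∙ u) ⊔ B.orthogonal ((K ∙ u) ⊔ (K ∙ v)) := by
  rw [Submodule.map_span, Set.image_singleton, Submodule.span_singleton_le_iff_mem]
  have hdecomp : A u = lineProj B u v (A u)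
      + (A u - lineProj B u v (A u) - lineProj B v u (A u)) := by
    rw [lineProj_apply_eq_zero hA]
    abel
  rw [hdecomp]
  exact Submodule.add_mem_sup (lineProj_mem_span _)
    (sub_lineProj_sub_lineProj_mem_orthogonal hB hu hv huv _)

theorem apply_ne_zero_of_inf_orthogonal_eq_bot {M : Submodule K W}
    (h : M ⊓ B.orthogonal (K ∙ u) = ⊥) (hv : v ∈ M) (hv0 : v ≠ 0) : B u v ≠ 0 := by
  intro huv
  have hvorth : v ∈ B.orthogonal (K ∙ u) := by
    rw [LinearMap.BilinForm.orthogonal_span_singleton_eq_toLin_ker]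
    exact huv
  have hvinf : v ∈ M ⊓ B.orthogonal (K ∙ u) := Submodule.mem_inf.mpr ⟨hv, hvorth⟩
  rw [h, Submodule.mem_bot] at hvinf
  exact hv0 hvinf

theorem apply_self_eq_zero_of_skew [NeZero (2 : K)] (hB : ∀ x y, B x y = B y x)
    {A : Module.End K W} (hA : ∀ x y, B (A x) y = - B x (A y)) (x : W) : B (A x) x = 0 := by
  have h := hA x x
  rw [hB x (A x)] at h
  have h2 : (2 : K) * B (A x) x = 0 := by linear_combination h
  exact (mul_eq_zero.mp h2).resolve_left two_ne_zero

end LineProj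

theorem ActsAs.eq_projScale {W : Type*} [AddCommGroup W] [Module ℂ W]
    {B : LinearMap.BilinForm ℂ W} {ρ : Module.End ℂ W} {L : Submodule ℂ W} {u v : W}
    (hB : ∀ x y, B x y = B y x) (hu : B u u = 0) (hv : B v v = 0) (huv : B u v ≠ 0)
    (hLu : L = ℂ ∙ u) (hLv : L.map ρ = ℂ ∙ v) {a b : ℂ} {T : Module.End ℂ W}
    (hT : ActsAs B ρ L a b T) : T = projScale (lineProj B u v) (lineProj B v u) a b := by
  obtain ⟨hTu, hTorth, hTv⟩ := hT
  rw [hLv] at hTorth hTv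
  rw [hLu] at hTu hTorth
  ext x
  have hdecomp : x = lineProj B u v x + (x - lineProj B u v x - lineProj B v u x)
      + lineProj B v u x := by abel
  have hTx : T x = a • lineProj B u v x + (x - lineProj B u v x - lineProj B v u x)
      + b • lineProj B v u x := by
    conv_lhs => rw [hdecomp]
    rw [map_add, map_add, hTu _ (lineProj_mem_span x), hTv _ (lineProj_mem_span x),
      hTorth _ (sub_lineProj_sub_lineProj_mem_orthogonal hB hu hv huv x)]
  rw [hTx]
  simp only [projScale, LinearMap.add_apply, LinearMap.smul_apply, Module.End.one_apply]
  module

theorem stmt9_general {W : Type*} [AddCommGroup W] [Module ℂ W]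
    (B : LinearMap.BilinForm ℂ W) (hB : ∀ x y, B x y = B y x)
    (ρ : Module.End ℂ W) (hρ2 : ρ * ρ = 1) (hρB : ∀ x y, B (ρ x) (ρ y) = B x y)
    (L : Submodule ℂ W) (hL1 : Module.finrank ℂ L = 1) (hLnull : ∀ l ∈ L, B l l = 0)
    (hLρ : Submodule.map ρ L ⊓ B.orthogonal L = ⊥)
    (α : ℂ)
    (A : Module.End ℂ W) (hA : ∀ x y, B (A x) y = - B x (A y))
    (P P' : ℂ → Module.End ℂ W)
    (hP : ∀ lam, lam ≠ α → lam ≠ -α →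
      ActsAs B ρ L ((α - lam) / (α + lam)) ((α + lam) / (α - lam)) (P lam))
    (hP' : ∀ lam, lam ≠ α → lam ≠ -α → P lam * P' lam = 1 ∧ P' lam * P lam = 1) :
    (Submodule.map A L ≤ L ⊔ B.orthogonal (L ⊔ Submodule.map ρ L) ∧
      Submodule.map A (Submodule.map ρ L)
        ≤ Submodule.map ρ L ⊔ B.orthogonal (L ⊔ Submodule.map ρ L)) ∧
    ∃ C0 C1 C2 : Module.End ℂ W, ∀ lam, lam ≠ α → lam ≠ -α →
      (lam ^ 2 - α ^ 2) • (P lam * A * P' lam) = C0 + lam • C1 + lam ^ 2 • C2 := by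
  obtain ⟨u, huL, hu0⟩ := Submodule.exists_mem_ne_zero_of_ne_bot (p := L)
    (by rintro rfl; simp at hL1)
  have hLu : L = ℂ ∙ u := eq_span_singleton_of_mem_of_finrank_eq_one hL1 huL hu0
  have hLv : L.map ρ = ℂ ∙ ρ u := by rw [hLu, Submodule.map_span, Set.image_singleton]
  have hu : B u u = 0 := hLnull u huL
  have hv : B (ρ u) (ρ u) = 0 := by rw [hρB, hu]
  have hv0 : ρ u ≠ 0 := fun h => hu0 (by simpa [h] using (LinearMap.ext_iff.mp hρ2 u).symm)
  have huv : B u (ρ u) ≠ 0 :=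
    apply_ne_zero_of_inf_orthogonal_eq_bot (hLu ▸ hLρ) (Submodule.mem_map_of_mem huL) hv0
  have hvu : B (ρ u) u ≠ 0 := hB u (ρ u) ▸ huv
  have hAu := apply_self_eq_zero_of_skew hB hA u
  have hAv := apply_self_eq_zero_of_skew hB hA (ρ u)
  refine ⟨⟨?_, ?_⟩, ?_⟩
  · rw [hLv, hLu]
    exact map_span_le_span_sup_orthogonal hB hu hv huv hAu
  · rw [hLv, hLu, sup_comm (ℂ ∙ u)]
    exact map_span_le_span_sup_orthogonal hB hv hu hvu hAv
  · obtain ⟨C₀, C₁, C₂, hC⟩ := exists_quadratic_sq_sub_sq_smul_projScale_conj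
      (lineProj_mul_mul_lineProj_swap hAv) (lineProj_mul_mul_lineProj_swap hAu) α
    refine ⟨C₀, C₁, C₂, fun t h₁ h₂ => ?_⟩
    have hs : α + t ≠ 0 := fun h => h₂ (by linear_combination h)
    have hd : α - t ≠ 0 := fun h => h₁ (by linear_combination -h)
    have hPt := (hP t h₁ h₂).eq_projScale hB hu hv huv hLu hLv
    have hPQ : P t * projScale (lineProj B u (ρ u)) (lineProj B (ρ u) u)
        ((α + t) / (α - t)) ((α - t) / (α + t)) = 1 := by
      rw [hPt]
      exact projScale_mul_projScale_eq_one (lineProj_mul_self huv) (lineProj_mul_self hvu)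
        (lineProj_mul_lineProj_swap hv) (lineProj_mul_lineProj_swap hu)
        (by field_simp) (by field_simp)
    rw [left_inv_eq_right_inv (hP' t h₁ h₂).2 hPQ, hPt]
    exact hC t h₁ h₂

/-- For `A` skew-adjoint: (i) `A L ⊆ L ⊕ (L ⊕ ρL)^⊥` and `A(ρL) ⊆ ρL ⊕ (L ⊕ ρL)^⊥`;
(ii) `λ ↦ (λ² - α²) p_{α,L}(λ) ∘ A ∘ p_{α,L}(λ)⁻¹` extends to a polynomial of degree at
most 2 in `λ`, so `λ ↦ p_{α,L}(λ) ∘ A ∘ p_{α,L}(λ)⁻¹` has at most simple poles at `±α`. -/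
theorem stmt9 {W : Type*} [AddCommGroup W] [Module ℂ W] [FiniteDimensional ℂ W]
    (B : LinearMap.BilinForm ℂ W) (hB : ∀ x y, B x y = B y x) (hBnd : B.Nondegenerate)
    (ρ : Module.End ℂ W) (hρ2 : ρ * ρ = 1) (hρB : ∀ x y, B (ρ x) (ρ y) = B x y)
    (L : Submodule ℂ W) (hL1 : Module.finrank ℂ L = 1) (hLnull : ∀ l ∈ L, B l l = 0)
    (hLρ : Submodule.map ρ L ⊓ B.orthogonal L = ⊥)
    (α : ℂ) (hα : α ≠ 0)
    (A : Module.End ℂ W) (hA : ∀ x y, B (A x) y = - B x (A y))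
    (P P' : ℂ → Module.End ℂ W)
    (hP : ∀ lam, lam ≠ α → lam ≠ -α →
      ActsAs B ρ L ((α - lam) / (α + lam)) ((α + lam) / (α - lam)) (P lam))
    (hP' : ∀ lam, lam ≠ α → lam ≠ -α → P lam * P' lam = 1 ∧ P' lam * P lam = 1) :
    (Submodule.map A L ≤ L ⊔ B.orthogonal (L ⊔ Submodule.map ρ L) ∧
      Submodule.map A (Submodule.map ρ L)
        ≤ Submodule.map ρ L ⊔ B.orthogonal (L ⊔ Submodule.map ρ L)) ∧
    ∃ C0 C1 C2 : Module.End ℂ W, ∀ lam, lam ≠ α → lam ≠ -α →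
      (lam ^ 2 - α ^ 2) • (P lam * A * P' lam) = C0 + lam • C1 + lam ^ 2 • C2 :=
  stmt9_general B hB ρ hρ2 hρB L hL1 hLnull hLρ α A hA P P' hP hP'
end

section
/- Suppose $W = L_1 \oplus L_0 \oplus L_{-1} = \hat{L}_1 \oplus \hat{L}_0 \oplus \hat{L}_{-1}$ are direct sum decompositions with $L_{\pm 1}$ and $\hat{L}_{\pm 1}$ null lines, $L_0 = (L_1 \oplus L_{-1})^\perp$ and $\hat{L}_0 = (\hat{L}_1 \oplus \hat{L}_{-1})^\perp$. For $\lambda \neq 0$ set $\gamma(\lambda) := \lambda\, \pi_{L_1} + \pi_{L_0} + \lambda^{-1} \pi_{L_{-1}}$ and $\hat{\gamma}(\lambda) := \lambda\, \pi_{\hat{L}_1} + \pi_{\hat{L}_0} + \lambda^{-1} \pi_{\hat{L}_{-1}}$, where $\pi$ denotes projection along the respective decomposition. Let $\xi$ be a holomorphic map from a neighborhood of $0$ in $\mathbb{C}$ into the orthogonal transformations of $W$ such that $L_1 = \xi(0)\hat{L}_1$. Then the map $\lambda \mapsto \gamma(\lambda)\, \xi(\lambda)\, \hat{\gamma}(\lambda)^{-1}$,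 defined for $\lambda \neq 0$ near $0$, extends holomorphically across $\lambda = 0$, and its value at $\lambda = 0$ is invertible. -/
/-!
In the blocks `π_i ξ π̂_j` the map `γ ξ γ̂⁻¹` carries the factor `λ^(i-j)`, so only the blocks
`(0,1)`, `(-1,0)` (order `λ⁻¹`) and `(-1,1)` (order `λ⁻²`) are singular. Since `ξ(0)` is
orthogonal and maps `L̂₁` onto `L₁`, it maps `L̂₁^⊥ = L̂₁ ⊕ L̂₀` onto `L₁^⊥ = L₁ ⊕ L₀ = ker π₋₁`;
this kills `π₀ ξ(0) π̂₁`, `π₋₁ ξ(0) π̂₁` and `π₋₁ ξ(0) π̂₀`. Differentiating the orthogonality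
of `ξ` shows that `(v, w) ↦ B(ξ(0) v, ξ'(0) w)` is skew, hence zero on the line `L̂₁`, which
gives `π₋₁ ξ'(0) π̂₁ = 0`. So every singular block extends across `0`, and the value at `0` is
block lower triangular; its diagonal blocks are the maps induced by `ξ(0)` between the graded
pieces of the flags `L̂₁ ⊂ L̂₁^⊥ ⊂ W` and `L₁ ⊂ L₁^⊥ ⊂ W`, all of them isomorphisms.
-/

open Filter Topology

namespace LinearMap.BilinForm

variable {K M : Type*} [Field K] [CharZero K] [AddCommGroup M] [Module K M]

theorem apply_eq_zero_of_isotropic {B : LinearMap.BilinForm K M} (hB : ∀ x y, B x y = B y x)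
    {N : Submodule K M} (hN : ∀ x ∈ N, B x x = 0) {x y : M} (hx : x ∈ N) (hy : y ∈ N) :
    B x y = 0 := by
  have h := hN (x + y) (add_mem hx hy)
  simp only [map_add, LinearMap.add_apply, hN x hx, hN y hy, hB y x] at h
  exact add_self_eq_zero.mp (by linear_combination h)

theorem apply_eq_zero_of_skew_of_finrank_eq_one {β : LinearMap.BilinForm K M}
    (hβ : ∀ v w, β v w = -β w v) {N : Submodule K M} (hN : Module.finrank K N = 1) {v w : M}
    (hv : v ∈ N) (hw : w ∈ N) : β v w = 0 := by
  rcases eq_or_ne v 0 with rfl | hv0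
  · simp
  obtain ⟨c, hc⟩ :=
    (finrank_eq_one_iff_of_nonzero' (⟨v, hv⟩ : N) (by simpa using hv0)).mp hN ⟨w, hw⟩
  have hvv : β v v = 0 := by
    have := hβ v v
    exact add_self_eq_zero.mp (by linear_combination this)
  have hwv : w = c • v := by simpa using (congrArg Subtype.val hc).symm
  simp [hwv, hvv]

end LinearMap.BilinForm

section

variable {𝕜 : Type*} [NontriviallyNormedField 𝕜] {E : Type*} [NormedAddCommGroup E]
  [NormedSpace 𝕜 E]

structure IsProjTriple (π1 π0 πm1 : E →L[𝕜] E) (L1 L0 Lm1 : Submodule 𝕜 E) : Prop where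
  add_add_eq_one : π1 + π0 + πm1 = 1
  mem_one : ∀ x, π1 x ∈ L1
  mem_zero : ∀ x, π0 x ∈ L0
  mem_negOne : ∀ x, πm1 x ∈ Lm1
  apply_of_mem_one : ∀ x ∈ L1, π1 x = x ∧ π0 x = 0 ∧ πm1 x = 0
  apply_of_mem_zero : ∀ x ∈ L0, π1 x = 0 ∧ π0 x = x ∧ πm1 x = 0
  apply_of_mem_negOne : ∀ x ∈ Lm1, π1 x = 0 ∧ π0 x = 0 ∧ πm1 x = x

namespace IsProjTriple

variable {π1 π0 πm1 πh1 πh0 πhm1 : E →L[𝕜] E} {L1 L0 Lm1 Lh1 Lh0 Lhm1 : Submodule 𝕜 E}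

theorem add_add_apply (hP : IsProjTriple π1 π0 πm1 L1 L0 Lm1) (x : E) :
    π1 x + π0 x + πm1 x = x := by
  simpa using congr($(hP.add_add_eq_one) x)

theorem mul_one_one (hP : IsProjTriple π1 π0 πm1 L1 L0 Lm1) : π1 * π1 = π1 :=
  ContinuousLinearMap.ext fun x => (hP.apply_of_mem_one _ (hP.mem_one x)).1

theorem mul_zero_one (hP : IsProjTriple π1 π0 πm1 L1 L0 Lm1) : π0 * π1 = 0 :=
  ContinuousLinearMap.ext fun x => (hP.apply_of_mem_one _ (hP.mem_one x)).2.1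

theorem mul_negOne_one (hP : IsProjTriple π1 π0 πm1 L1 L0 Lm1) : πm1 * π1 = 0 :=
  ContinuousLinearMap.ext fun x => (hP.apply_of_mem_one _ (hP.mem_one x)).2.2

theorem mul_one_zero (hP : IsProjTriple π1 π0 πm1 L1 L0 Lm1) : π1 * π0 = 0 :=
  ContinuousLinearMap.ext fun x => (hP.apply_of_mem_zero _ (hP.mem_zero x)).1

theorem mul_zero_zero (hP : IsProjTriple π1 π0 πm1 L1 L0 Lm1) : π0 * π0 = π0 :=
  ContinuousLinearMap.ext fun x => (hP.apply_of_mem_zero _ (hP.mem_zero x)).2.1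

theorem mul_negOne_zero (hP : IsProjTriple π1 π0 πm1 L1 L0 Lm1) : πm1 * π0 = 0 :=
  ContinuousLinearMap.ext fun x => (hP.apply_of_mem_zero _ (hP.mem_zero x)).2.2

theorem mul_one_negOne (hP : IsProjTriple π1 π0 πm1 L1 L0 Lm1) : π1 * πm1 = 0 :=
  ContinuousLinearMap.ext fun x => (hP.apply_of_mem_negOne _ (hP.mem_negOne x)).1

theorem mul_zero_negOne (hP : IsProjTriple π1 π0 πm1 L1 L0 Lm1) : π0 * πm1 = 0 :=
  ContinuousLinearMap.ext fun x => (hP.apply_of_mem_negOne _ (hP.mem_negOne x)).2.1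

theorem mul_negOne_negOne (hP : IsProjTriple π1 π0 πm1 L1 L0 Lm1) : πm1 * πm1 = πm1 :=
  ContinuousLinearMap.ext fun x => (hP.apply_of_mem_negOne _ (hP.mem_negOne x)).2.2

theorem scaling_mul_scaling_inv (hP : IsProjTriple π1 π0 πm1 L1 L0 Lm1) {c : 𝕜} (hc : c ≠ 0) :
    (c • π1 + π0 + c⁻¹ • πm1) * (c⁻¹ • π1 + π0 + c • πm1) = 1 := by
  simp only [add_mul, mul_add, smul_mul_assoc, mul_smul_comm, smul_smul, hP.mul_one_one,
    hP.mul_zero_one, hP.mul_negOne_one, hP.mul_one_zero, hP.mul_zero_zero, hP.mul_negOne_zero,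
    hP.mul_one_negOne, hP.mul_zero_negOne, hP.mul_negOne_negOne, smul_zero, add_zero, zero_add,
    mul_inv_cancel₀ hc, inv_mul_cancel₀ hc, one_smul]
  exact hP.add_add_eq_one

theorem injective_blockLowerTriangular
    (hP : IsProjTriple π1 π0 πm1 L1 L0 Lm1) (hP' : IsProjTriple πh1 πh0 πhm1 Lh1 Lh0 Lhm1)
    {T A C D : E →L[𝕜] E} (hA : π0 * A * πh1 = A) (hC : πm1 * C * πh1 = C)
    (hD : πm1 * D * πh0 = D) (hT1 : ∀ v ∈ Lh1, π1 (T v) = 0 → v = 0)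
    (hT0 : ∀ v ∈ Lh0, π0 (T v) = 0 → v = 0) (hTm1 : ∀ v ∈ Lhm1, πm1 (T v) = 0 → v = 0) :
    Function.Injective (π1 * T * πh1 + π0 * T * πh0 + πm1 * T * πhm1 + A + C + D) := by
  rw [← hA, ← hC, ← hD]
  set S := π1 * T * πh1 + π0 * T * πh0 + πm1 * T * πhm1 + π0 * A * πh1 + πm1 * C * πh1
    + πm1 * D * πh0
  have hS1 : π1 * S = π1 * T * πh1 := by
    simp only [S, mul_add, ← mul_assoc, hP.mul_one_one, hP.mul_one_zero, hP.mul_one_negOne,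
      zero_mul, add_zero]
  have hS0 : π0 * S = π0 * T * πh0 + π0 * A * πh1 := by
    simp only [S, mul_add, ← mul_assoc, hP.mul_zero_one, hP.mul_zero_zero, hP.mul_zero_negOne,
      zero_mul, add_zero, zero_add]
  have hSm1 : πm1 * S = πm1 * T * πhm1 + πm1 * C * πh1 + πm1 * D * πh0 := by
    simp only [S, mul_add, ← mul_assoc, hP.mul_negOne_one, hP.mul_negOne_zero,
      hP.mul_negOne_negOne, zero_mul, add_zero, zero_add]
  rw [injective_iff_map_eq_zero]
  intro x hx
  have hx1 : πh1 x = 0 := hT1 _ (hP'.mem_one x) (by simpa [hx] using congr($hS1 x).symm)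
  have hx0 : πh0 x = 0 := hT0 _ (hP'.mem_zero x) (by simpa [hx, hx1] using congr($hS0 x).symm)
  have hxm1 : πhm1 x = 0 :=
    hTm1 _ (hP'.mem_negOne x) (by simpa [hx, hx1, hx0] using congr($hSm1 x).symm)
  rw [← hP'.add_add_apply x, hx1, hx0, hxm1, add_zero, add_zero]

theorem mul_mul_one_eq_zero_of_map (hP : IsProjTriple π1 π0 πm1 L1 L0 Lm1)
    (hP' : IsProjTriple πh1 πh0 πhm1 Lh1 Lh0 Lhm1) {T : E →L[𝕜] E}
    (hTL : Submodule.map (T : E →ₗ[𝕜] E) Lh1 = L1) :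
    π0 * T * πh1 = 0 ∧ πm1 * T * πh1 = 0 := by
  have hmem (x : E) : T (πh1 x) ∈ L1 := hTL ▸ Submodule.mem_map_of_mem (hP'.mem_one x)
  exact ⟨ContinuousLinearMap.ext fun x => (hP.apply_of_mem_one _ (hmem x)).2.1,
    ContinuousLinearMap.ext fun x => (hP.apply_of_mem_one _ (hmem x)).2.2⟩

end IsProjTriple

theorem HasDerivAt.bilinForm_skew_of_eventually_orthogonal [CompleteSpace 𝕜]
    [FiniteDimensional 𝕜 E] {B : LinearMap.BilinForm 𝕜 E} {ξ : 𝕜 → E →L[𝕜] E} {ξ' : E →L[𝕜] E}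
    {t₀ : 𝕜} (hξ : HasDerivAt ξ ξ' t₀)
    (horth : ∀ᶠ t in 𝓝 t₀, ∀ x y, B (ξ t x) (ξ t y) = B x y) (v w : E) :
    B (ξ' v) (ξ t₀ w) + B (ξ t₀ v) (ξ' w) = 0 := by
  have hvw := B.toContinuousBilinearMap.hasDerivAt_of_bilinear
    (fun _ => hξ.clm_apply (hasDerivAt_const t₀ v)) (fun _ => hξ.clm_apply (hasDerivAt_const t₀ w))
  have hconst : HasDerivAt (fun t => B.toContinuousBilinearMap (ξ t v) (ξ t w)) 0 t₀ :=
    (hasDerivAt_const t₀ (B v w)).congr_of_eventuallyEq (horth.mono fun t ht => by simp [ht])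
  simpa [add_comm] using hvw.unique hconst

structure IsNullSplitting (B : LinearMap.BilinForm 𝕜 E) (L1 L0 Lm1 : Submodule 𝕜 E) : Prop where
  isotropic_one : ∀ x ∈ L1, B x x = 0
  isotropic_negOne : ∀ x ∈ Lm1, B x x = 0
  eq_orthogonal : L0 = B.orthogonal (L1 ⊔ Lm1)

namespace IsProjTriple

variable [CharZero 𝕜] {B : LinearMap.BilinForm 𝕜 E} {π1 π0 πm1 πh1 πh0 πhm1 : E →L[𝕜] E}
  {L1 L0 Lm1 Lh1 Lh0 Lhm1 : Submodule 𝕜 E}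

theorem bilin_eq (hP : IsProjTriple π1 π0 πm1 L1 L0 Lm1) (hL : IsNullSplitting B L1 L0 Lm1)
    (hB : ∀ x y, B x y = B y x) (x y : E) :
    B x y = B (π1 x) (πm1 y) + B (π0 x) (π0 y) + B (πm1 x) (π1 y) := by
  have horth : ∀ a ∈ L1 ⊔ Lm1, ∀ b ∈ L0, B a b = 0 := fun a ha b hb => by
    rw [hL.eq_orthogonal] at hb
    exact LinearMap.BilinForm.mem_orthogonal_iff.mp hb a ha
  have h1 : ∀ z, z ∈ L1 → z ∈ L1 ⊔ Lm1 := fun _ => Submodule.mem_sup_left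
  have hm1 : ∀ z, z ∈ Lm1 → z ∈ L1 ⊔ Lm1 := fun _ => Submodule.mem_sup_right
  conv_lhs => rw [← hP.add_add_apply x, ← hP.add_add_apply y]
  simp only [map_add, LinearMap.add_apply]
  rw [LinearMap.BilinForm.apply_eq_zero_of_isotropic hB hL.isotropic_one (hP.mem_one x)
      (hP.mem_one y),
    LinearMap.BilinForm.apply_eq_zero_of_isotropic hB hL.isotropic_negOne (hP.mem_negOne x)
      (hP.mem_negOne y),
    horth _ (h1 _ (hP.mem_one x)) _ (hP.mem_zero y),
    horth _ (hm1 _ (hP.mem_negOne x)) _ (hP.mem_zero y),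
    hB (π0 x) (π1 y), hB (π0 x) (πm1 y), horth _ (h1 _ (hP.mem_one y)) _ (hP.mem_zero x),
    horth _ (hm1 _ (hP.mem_negOne y)) _ (hP.mem_zero x)]
  ring

theorem apply_negOne_eq_zero_iff (hP : IsProjTriple π1 π0 πm1 L1 L0 Lm1)
    (hL : IsNullSplitting B L1 L0 Lm1) (hB : ∀ x y, B x y = B y x) (hBnd : B.Nondegenerate)
    (y : E) : πm1 y = 0 ↔ ∀ a ∈ L1, B a y = 0 := by
  have hpair : ∀ a ∈ L1, B a y = B a (πm1 y) := fun a ha => by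
    obtain ⟨ha1, ha0, ham1⟩ := hP.apply_of_mem_one a ha
    rw [hP.bilin_eq hL hB, ha1, ha0, ham1]
    simp
  refine ⟨fun h a ha => by rw [hpair a ha, h, map_zero], fun h => hBnd.2 _ fun n => ?_⟩
  obtain ⟨hy1, hy0, hym1⟩ := hP.apply_of_mem_negOne _ (hP.mem_negOne y)
  rw [hP.bilin_eq hL hB, hy1, hy0, hym1, ← hpair _ (hP.mem_one n), h _ (hP.mem_one n)]
  simp

theorem apply_negOne_map_eq_zero_iff (hP : IsProjTriple π1 π0 πm1 L1 L0 Lm1)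
    (hL : IsNullSplitting B L1 L0 Lm1) (hP' : IsProjTriple πh1 πh0 πhm1 Lh1 Lh0 Lhm1)
    (hL' : IsNullSplitting B Lh1 Lh0 Lhm1) (hB : ∀ x y, B x y = B y x) (hBnd : B.Nondegenerate)
    {T : E →L[𝕜] E} (hT : ∀ x y, B (T x) (T y) = B x y)
    (hTL : Submodule.map (T : E →ₗ[𝕜] E) Lh1 = L1) (v : E) :
    πm1 (T v) = 0 ↔ πhm1 v = 0 := by
  rw [hP.apply_negOne_eq_zero_iff hL hB hBnd, hP'.apply_negOne_eq_zero_iff hL' hB hBnd, ← hTL]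
  simp [hT]

theorem negOne_mul_mul_zero_eq_zero (hP : IsProjTriple π1 π0 πm1 L1 L0 Lm1)
    (hL : IsNullSplitting B L1 L0 Lm1) (hP' : IsProjTriple πh1 πh0 πhm1 Lh1 Lh0 Lhm1)
    (hL' : IsNullSplitting B Lh1 Lh0 Lhm1) (hB : ∀ x y, B x y = B y x) (hBnd : B.Nondegenerate)
    {T : E →L[𝕜] E} (hT : ∀ x y, B (T x) (T y) = B x y)
    (hTL : Submodule.map (T : E →ₗ[𝕜] E) Lh1 = L1) : πm1 * T * πh0 = 0 :=
  ContinuousLinearMap.ext fun x => (hP.apply_negOne_map_eq_zero_iff hL hP' hL' hB hBnd hT hTL _).2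
    (hP'.apply_of_mem_zero _ (hP'.mem_zero x)).2.2

theorem diagonal_injective (hP : IsProjTriple π1 π0 πm1 L1 L0 Lm1)
    (hL : IsNullSplitting B L1 L0 Lm1) (hP' : IsProjTriple πh1 πh0 πhm1 Lh1 Lh0 Lhm1)
    (hL' : IsNullSplitting B Lh1 Lh0 Lhm1) (hB : ∀ x y, B x y = B y x) (hBnd : B.Nondegenerate)
    {T : E →L[𝕜] E} (hT : ∀ x y, B (T x) (T y) = B x y) (hTinj : Function.Injective T)
    (hTL : Submodule.map (T : E →ₗ[𝕜] E) Lh1 = L1) :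
    (∀ v ∈ Lh1, π1 (T v) = 0 → v = 0) ∧ (∀ v ∈ Lh0, π0 (T v) = 0 → v = 0) ∧
      (∀ v ∈ Lhm1, πm1 (T v) = 0 → v = 0) := by
  have hmem {v : E} (hv : v ∈ Lh1) : T v ∈ L1 := hTL ▸ Submodule.mem_map_of_mem hv
  have htransport := hP.apply_negOne_map_eq_zero_iff hL hP' hL' hB hBnd hT hTL
  refine ⟨fun v hv h => hTinj ?_, fun v hv h => ?_, fun v hv h => ?_⟩
  · rw [← (hP.apply_of_mem_one _ (hmem hv)).1, h, map_zero]
  · have hTv : T v ∈ L1 := by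
      have hm1 : πm1 (T v) = 0 := (htransport v).2 (hP'.apply_of_mem_zero v hv).2.2
      rw [← hP.add_add_apply (T v), h, hm1, add_zero, add_zero]
      exact hP.mem_one _
    obtain ⟨w, hw, hwv⟩ := (Submodule.mem_map.mp (hTL ▸ hTv : T v ∈ Submodule.map _ Lh1))
    have hvw : v = w := hTinj hwv.symm
    rw [← (hP'.apply_of_mem_zero v hv).1, hvw, (hP'.apply_of_mem_one w hw).1]
  · rw [← (hP'.apply_of_mem_negOne v hv).2.2]
    exact (htransport v).1 h

theorem negOne_mul_deriv_mul_one_eq_zero [CompleteSpace 𝕜] [FiniteDimensional 𝕜 E]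
    (hP : IsProjTriple π1 π0 πm1 L1 L0 Lm1)
    (hL : IsNullSplitting B L1 L0 Lm1) (hP' : IsProjTriple πh1 πh0 πhm1 Lh1 Lh0 Lhm1)
    (hLh1 : Module.finrank 𝕜 Lh1 = 1) (hB : ∀ x y, B x y = B y x) (hBnd : B.Nondegenerate)
    {ξ : 𝕜 → E →L[𝕜] E} {ξ' : E →L[𝕜] E} (hξ : HasDerivAt ξ ξ' 0)
    (horth : ∀ᶠ t in 𝓝 0, ∀ x y, B (ξ t x) (ξ t y) = B x y)
    (hTL : Submodule.map (ξ 0 : E →ₗ[𝕜] E) Lh1 = L1) : πm1 * ξ' * πh1 = 0 := by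
  have hskew := hξ.bilinForm_skew_of_eventually_orthogonal horth
  refine ContinuousLinearMap.ext fun x => (hP.apply_negOne_eq_zero_iff hL hB hBnd _).2 ?_
  rw [← hTL]
  rintro _ ⟨w, hw, rfl⟩
  exact LinearMap.BilinForm.apply_eq_zero_of_skew_of_finrank_eq_one
    (β := B.compl₁₂ (ξ 0 : E →ₗ[𝕜] E) (ξ' : E →ₗ[𝕜] E))
    (fun v w => by simpa [hB (ξ' v)] using eq_neg_of_add_eq_zero_right (hskew v w))
    hLh1 hw (hP'.mem_one x)

end IsProjTriple

theorem dslope_zero_eq_inv_smul {F : Type*} [NormedAddCommGroup F] [NormedSpace 𝕜 F] {f : 𝕜 → F}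
    (hf : f 0 = 0) {t : 𝕜} (ht : t ≠ 0) : dslope f 0 t = t⁻¹ • f t := by
  rw [dslope_of_ne _ ht, slope_def_module, hf, sub_zero, sub_zero]

theorem mul_dslope_mul_eq_dslope {F : 𝕜 → E →L[𝕜] E} {p q : E →L[𝕜] E}
    (hF : ∀ t, p * F t * q = F t) {a : 𝕜} (hd : DifferentiableAt 𝕜 F a) (b : 𝕜) :
    p * dslope F a b * q = dslope F a b := by
  have := (ContinuousLinearMap.mulLeftRight 𝕜 (E →L[𝕜] E) p q).dslope_comp F a b fun _ => hd
  simp only [Function.comp_def, ContinuousLinearMap.mulLeftRight_apply, hF] at this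
  exact this.symm

section Extension

variable {W : Type*} [NormedAddCommGroup W] [NormedSpace ℂ W] [FiniteDimensional ℂ W]
  {π1 π0 πm1 πh1 πh0 πhm1 : W →L[ℂ] W} {L1 L0 Lm1 Lh1 Lh0 Lhm1 : Submodule ℂ W}

theorem exists_differentiableOn_eq_scaling_mul_mul_scaling_inv
    (hP : IsProjTriple π1 π0 πm1 L1 L0 Lm1) (hP' : IsProjTriple πh1 πh0 πhm1 Lh1 Lh0 Lhm1)
    {U : Set ℂ} (hU : U ∈ 𝓝 0) {ξ : ℂ → W →L[ℂ] W} (hξ : DifferentiableOn ℂ ξ U)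
    (h01 : π0 * ξ 0 * πh1 = 0) (hm11 : πm1 * ξ 0 * πh1 = 0) (hm10 : πm1 * ξ 0 * πh0 = 0)
    (hm11' : πm1 * deriv ξ 0 * πh1 = 0)
    (hT1 : ∀ v ∈ Lh1, π1 (ξ 0 v) = 0 → v = 0) (hT0 : ∀ v ∈ Lh0, π0 (ξ 0 v) = 0 → v = 0)
    (hTm1 : ∀ v ∈ Lhm1, πm1 (ξ 0 v) = 0 → v = 0) :
    ∃ G : ℂ → W →L[ℂ] W, DifferentiableOn ℂ G U ∧
      (∀ t ≠ 0, G t = (t • π1 + π0 + t⁻¹ • πm1) * ξ t * (t⁻¹ • πh1 + πh0 + t • πhm1)) ∧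
      IsUnit (G 0) := by
  have hblock (p q : W →L[ℂ] W) : DifferentiableOn ℂ (fun t => p * ξ t * q) U :=
    ((differentiableOn_const p).mul hξ).mul (differentiableOn_const q)
  have hsandwich {p q : W →L[ℂ] W} (hp : p * p = p) (hq : q * q = q) (t : ℂ) :
      p * (p * ξ t * q) * q = p * ξ t * q := by
    rw [← mul_assoc, ← mul_assoc, hp, mul_assoc _ q q, hq]
  set A := dslope (fun t => π0 * ξ t * πh1) 0 with hA
  set D := dslope (fun t => πm1 * ξ t * πh0) 0 with hD
  set F := dslope (fun t => πm1 * ξ t * πh1) 0 with hF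
  set C := dslope F 0 with hC
  have hF0 : F 0 = 0 := by
    rw [hF, dslope_same, ← hm11']
    exact (((hξ.differentiableAt hU).hasDerivAt.const_mul πm1).mul_const πh1).deriv
  have hFd : DifferentiableOn ℂ F U := (Complex.differentiableOn_dslope hU).2 (hblock _ _)
  refine ⟨fun t => π1 * ξ t * πh1 + π0 * ξ t * πh0 + πm1 * ξ t * πhm1
      + t • (π1 * ξ t * πh0 + π0 * ξ t * πhm1) + (t * t) • (π1 * ξ t * πhm1) + A t + C t + D t,
    ?_, fun t ht => ?_, ?_⟩
  · have hAd : DifferentiableOn ℂ A U := (Complex.differentiableOn_dslope hU).2 (hblock _ _)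
    have hDd : DifferentiableOn ℂ D U := (Complex.differentiableOn_dslope hU).2 (hblock _ _)
    have hCd : DifferentiableOn ℂ C U := (Complex.differentiableOn_dslope hU).2 hFd
    fun_prop
  · have hCt : C t = (t⁻¹ * t⁻¹) • (πm1 * ξ t * πh1) := by
      rw [hC, dslope_zero_eq_inv_smul hF0 ht, hF,
        dslope_zero_eq_inv_smul (f := fun t => πm1 * ξ t * πh1) hm11 ht, smul_smul]
    beta_reduce
    rw [hCt, hA, hD, dslope_zero_eq_inv_smul (f := fun t => π0 * ξ t * πh1) h01 ht,
      dslope_zero_eq_inv_smul (f := fun t => πm1 * ξ t * πh0) hm10 ht]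
    simp only [add_mul, mul_add, smul_mul_assoc, mul_smul_comm, smul_add, smul_smul,
      mul_inv_cancel₀ ht, inv_mul_cancel₀ ht, one_smul]
    module
  · have hA0 : π0 * A 0 * πh1 = A 0 :=
      mul_dslope_mul_eq_dslope (hsandwich hP.mul_zero_zero hP'.mul_one_one)
        ((hblock _ _).differentiableAt hU) 0
    have hD0 : πm1 * D 0 * πh0 = D 0 :=
      mul_dslope_mul_eq_dslope (hsandwich hP.mul_negOne_negOne hP'.mul_zero_zero)
        ((hblock _ _).differentiableAt hU) 0
    have hC0 : πm1 * C 0 * πh1 = C 0 :=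
      mul_dslope_mul_eq_dslope (mul_dslope_mul_eq_dslope
        (hsandwich hP.mul_negOne_negOne hP'.mul_one_one) ((hblock _ _).differentiableAt hU))
        (hFd.differentiableAt hU) 0
    have hinj := hP.injective_blockLowerTriangular hP' hA0 hC0 hD0 hT1 hT0 hTm1
    simp only [mul_zero, zero_smul, add_zero]
    exact ContinuousLinearMap.isUnit_iff_bijective.2
      ⟨hinj, LinearMap.injective_iff_surjective.1 hinj⟩

end Extension

end

theorem stmt11_general {W : Type*} [NormedAddCommGroup W] [NormedSpace ℂ W] [FiniteDimensional ℂ W]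
    (B : LinearMap.BilinForm ℂ W) (hB : ∀ x y, B x y = B y x) (hBnd : B.Nondegenerate)
    (L1 L0 Lm1 Lh1 Lh0 Lhm1 : Submodule ℂ W)
    (hL1null : ∀ x ∈ L1, B x x = 0)
    (hLm1null : ∀ x ∈ Lm1, B x x = 0)
    (hLh1 : Module.finrank ℂ Lh1 = 1) (hLh1null : ∀ x ∈ Lh1, B x x = 0)
    (hLhm1null : ∀ x ∈ Lhm1, B x x = 0)
    (hL0 : L0 = B.orthogonal (L1 ⊔ Lm1)) (hLh0 : Lh0 = B.orthogonal (Lh1 ⊔ Lhm1))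
    (π1 π0 πm1 πh1 πh0 πhm1 : W →L[ℂ] W)
    (hsum : π1 + π0 + πm1 = 1) (hsumh : πh1 + πh0 + πhm1 = 1)
    (hrg1 : ∀ x, π1 x ∈ L1) (hrg0 : ∀ x, π0 x ∈ L0) (hrgm1 : ∀ x, πm1 x ∈ Lm1)
    (hrgh1 : ∀ x, πh1 x ∈ Lh1) (hrgh0 : ∀ x, πh0 x ∈ Lh0) (hrghm1 : ∀ x, πhm1 x ∈ Lhm1)
    (hπ1 : ∀ x ∈ L1, π1 x = x ∧ π0 x = 0 ∧ πm1 x = 0)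
    (hπ0 : ∀ x ∈ L0, π1 x = 0 ∧ π0 x = x ∧ πm1 x = 0)
    (hπm1 : ∀ x ∈ Lm1, π1 x = 0 ∧ π0 x = 0 ∧ πm1 x = x)
    (hπh1 : ∀ x ∈ Lh1, πh1 x = x ∧ πh0 x = 0 ∧ πhm1 x = 0)
    (hπh0 : ∀ x ∈ Lh0, πh1 x = 0 ∧ πh0 x = x ∧ πhm1 x = 0)
    (hπhm1 : ∀ x ∈ Lhm1, πh1 x = 0 ∧ πh0 x = 0 ∧ πhm1 x = x)
    (U : Set ℂ) (hUo : IsOpen U) (h0U : (0 : ℂ) ∈ U)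
    (ξ : ℂ → W →L[ℂ] W) (hξ : DifferentiableOn ℂ ξ U)
    (hξorth : ∀ lam ∈ U, IsUnit (ξ lam) ∧ ∀ x y, B (ξ lam x) (ξ lam y) = B x y)
    (hξ0 : Submodule.map ((ξ 0 : W →L[ℂ] W) : W →ₗ[ℂ] W) Lh1 = L1) :
    ∃ G : ℂ → W →L[ℂ] W, DifferentiableOn ℂ G U ∧
      (∀ lam : ℂ, lam ∈ U → lam ≠ 0 →
        (lam • πh1 + πh0 + lam⁻¹ • πhm1) * (lam⁻¹ • πh1 + πh0 + lam • πhm1) = 1 ∧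
        G lam = (lam • π1 + π0 + lam⁻¹ • πm1) * ξ lam * (lam⁻¹ • πh1 + πh0 + lam • πhm1)) ∧
      IsUnit (G 0) := by
  have hP : IsProjTriple π1 π0 πm1 L1 L0 Lm1 := ⟨hsum, hrg1, hrg0, hrgm1, hπ1, hπ0, hπm1⟩
  have hP' : IsProjTriple πh1 πh0 πhm1 Lh1 Lh0 Lhm1 :=
    ⟨hsumh, hrgh1, hrgh0, hrghm1, hπh1, hπh0, hπhm1⟩
  have hL : IsNullSplitting B L1 L0 Lm1 := ⟨hL1null, hLm1null, hL0⟩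
  have hL' : IsNullSplitting B Lh1 Lh0 Lhm1 := ⟨hLh1null, hLhm1null, hLh0⟩
  have hU : U ∈ 𝓝 0 := hUo.mem_nhds h0U
  obtain ⟨hunit, hξ0orth⟩ := hξorth 0 h0U
  have hinj : Function.Injective (ξ 0) := (ContinuousLinearMap.isUnit_iff_bijective.1 hunit).1
  obtain ⟨h01, hm11⟩ := hP.mul_mul_one_eq_zero_of_map hP' hξ0
  have hm10 := hP.negOne_mul_mul_zero_eq_zero hL hP' hL' hB hBnd hξ0orth hξ0
  have hm11' := hP.negOne_mul_deriv_mul_one_eq_zero hL hP' hLh1 hB hBnd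
    (hξ.differentiableAt hU).hasDerivAt (eventually_of_mem hU fun t ht => (hξorth t ht).2) hξ0
  obtain ⟨hT1, hT0, hTm1⟩ := hP.diagonal_injective hL hP' hL' hB hBnd hξ0orth hinj hξ0
  obtain ⟨G, hGd, hGeq, hG0⟩ := exists_differentiableOn_eq_scaling_mul_mul_scaling_inv hP hP' hU
    hξ h01 hm11 hm10 hm11' hT1 hT0 hTm1
  exact ⟨G, hGd, fun t _ ht => ⟨hP'.scaling_mul_scaling_inv ht, hGeq t ht⟩, hG0⟩

/-- Lemma of Isothermic-Surfaces type: given two decompositions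
`W = L₁ ⊕ L₀ ⊕ L₋₁ = L̂₁ ⊕ L̂₀ ⊕ L̂₋₁` with `L±₁, L̂±₁` null lines and
`L₀ = (L₁ ⊕ L₋₁)^⊥`, `L̂₀ = (L̂₁ ⊕ L̂₋₁)^⊥`, projections `π, π̂` along the respective
decompositions, `γ(λ) = λπ₁ + π₀ + λ⁻¹π₋₁`, `γ̂(λ) = λπ̂₁ + π̂₀ + λ⁻¹π̂₋₁`, and a
holomorphic map `ξ` into orthogonal transformations defined near `0` with
`L₁ = ξ(0) L̂₁`, the map `λ ↦ γ(λ) ξ(λ) γ̂(λ)⁻¹` extends holomorphically across `0`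
with invertible value at `0`. -/
theorem stmt11 {W : Type*} [NormedAddCommGroup W] [NormedSpace ℂ W] [FiniteDimensional ℂ W]
    (B : LinearMap.BilinForm ℂ W) (hB : ∀ x y, B x y = B y x) (hBnd : B.Nondegenerate)
    (L1 L0 Lm1 Lh1 Lh0 Lhm1 : Submodule ℂ W)
    (hL1 : Module.finrank ℂ L1 = 1) (hL1null : ∀ x ∈ L1, B x x = 0)
    (hLm1 : Module.finrank ℂ Lm1 = 1) (hLm1null : ∀ x ∈ Lm1, B x x = 0)
    (hLh1 : Module.finrank ℂ Lh1 = 1) (hLh1null : ∀ x ∈ Lh1, B x x = 0)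
    (hLhm1 : Module.finrank ℂ Lhm1 = 1) (hLhm1null : ∀ x ∈ Lhm1, B x x = 0)
    (hL0 : L0 = B.orthogonal (L1 ⊔ Lm1)) (hLh0 : Lh0 = B.orthogonal (Lh1 ⊔ Lhm1))
    (π1 π0 πm1 πh1 πh0 πhm1 : W →L[ℂ] W)
    (hsum : π1 + π0 + πm1 = 1) (hsumh : πh1 + πh0 + πhm1 = 1)
    (hrg1 : ∀ x, π1 x ∈ L1) (hrg0 : ∀ x, π0 x ∈ L0) (hrgm1 : ∀ x, πm1 x ∈ Lm1)
    (hrgh1 : ∀ x, πh1 x ∈ Lh1) (hrgh0 : ∀ x, πh0 x ∈ Lh0) (hrghm1 : ∀ x, πhm1 x ∈ Lhm1)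
    (hπ1 : ∀ x ∈ L1, π1 x = x ∧ π0 x = 0 ∧ πm1 x = 0)
    (hπ0 : ∀ x ∈ L0, π1 x = 0 ∧ π0 x = x ∧ πm1 x = 0)
    (hπm1 : ∀ x ∈ Lm1, π1 x = 0 ∧ π0 x = 0 ∧ πm1 x = x)
    (hπh1 : ∀ x ∈ Lh1, πh1 x = x ∧ πh0 x = 0 ∧ πhm1 x = 0)
    (hπh0 : ∀ x ∈ Lh0, πh1 x = 0 ∧ πh0 x = x ∧ πhm1 x = 0)
    (hπhm1 : ∀ x ∈ Lhm1, πh1 x = 0 ∧ πh0 x = 0 ∧ πhm1 x = x)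
    (U : Set ℂ) (hUo : IsOpen U) (h0U : (0 : ℂ) ∈ U)
    (ξ : ℂ → W →L[ℂ] W) (hξ : DifferentiableOn ℂ ξ U)
    (hξorth : ∀ lam ∈ U, IsUnit (ξ lam) ∧ ∀ x y, B (ξ lam x) (ξ lam y) = B x y)
    (hξ0 : Submodule.map ((ξ 0 : W →L[ℂ] W) : W →ₗ[ℂ] W) Lh1 = L1) :
    ∃ G : ℂ → W →L[ℂ] W, DifferentiableOn ℂ G U ∧
      (∀ lam : ℂ, lam ∈ U → lam ≠ 0 →
        (lam • πh1 + πh0 + lam⁻¹ • πhm1) * (lam⁻¹ • πh1 + πh0 + lam • πhm1) = 1 ∧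
        G lam = (lam • π1 + π0 + lam⁻¹ • πm1) * ξ lam * (lam⁻¹ • πh1 + πh0 + lam • πhm1)) ∧
      IsUnit (G 0) :=
  stmt11_general B hB hBnd L1 L0 Lm1 Lh1 Lh0 Lhm1 hL1null hLm1null hLh1 hLh1null hLhm1null hL0 hLh0
    π1 π0 πm1 πh1 πh0 πhm1 hsum hsumh hrg1 hrg0 hrgm1 hrgh1 hrgh0 hrghm1 hπ1 hπ0 hπm1 hπh1 hπh0
    hπhm1 U hUo h0U ξ hξ hξorth hξ0
end
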